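/- arXiv:1203.5800 — 3 statements merged into one kernel-verified Lean document; each statement's English description precedes it below -/
import Mathlib

section
/- Let g ∈ M_n(R) with R = 𝔽_p[x,x⁻¹]. The submodule g·R^n is a maximal R-submodule of R^n if and only if det(g) is nonzero and irreducible in R. -/
/-!
Over a principal ideal domain `R`, Smith normal form shows that every submodule of `Rⁿ` is
`P · diag(a) · Rⁿ` with `P` invertible. If `g Rⁿ ⊆ h Rⁿ` then `g = h c`, so `det h ∣ det g`, and
when moreover `det g ∣ det h ≠ 0` the factor `c` is invertible and the two images coincide.
So if `det g` is irreducible, a submodule `h Rⁿ ⊋ g Rⁿ` has `det h` a unit and is all of `Rⁿ`.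
Conversely, if `g Rⁿ = P · diag(a) · Rⁿ` is maximal, so is `∏ⱼ (a j)` among submodules and hence
in the product lattice of ideals: one `(a j)` is a maximal ideal, nonzero because `R` is not a
field, and every other `a k` is a unit; thus `det g ~ ∏ⱼ a j` is irreducible.
`𝔽_p[T, T⁻¹]` is such a ring: a localization of the PID `𝔽_p[T]`, in which `T - 1` is a nonzero
nonunit.
-/

open Matrix LinearMap

theorem IsCoatom.of_strictMono {α β : Type*} [PartialOrder α] [OrderTop α] [PartialOrder β]
    [OrderTop β] {f : α → β} (hf : StrictMono f) (htop : f ⊤ = ⊤) {a : α} (h : IsCoatom (f a)) :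
    IsCoatom a := by
  refine ⟨fun ha => h.1 (ha ▸ htop), fun b hab => ?_⟩
  by_contra hb
  exact (htop ▸ hf (lt_top_iff_ne_top.2 hb)).ne (h.2 _ (hf hab))

theorem Submodule.pi_univ_strictMono {R ι : Type*} [Semiring R] [DecidableEq ι] {φ : ι → Type*}
    [∀ i, AddCommMonoid (φ i)] [∀ i, Module R (φ i)] :
    StrictMono
      (Submodule.pi Set.univ : ((i : ι) → Submodule R (φ i)) → Submodule R (∀ i, φ i)) := by
  intro p q hpq
  obtain ⟨hle, k, hk⟩ := Pi.lt_def.1 hpq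
  obtain ⟨x, hxq, hxp⟩ := SetLike.exists_of_lt hk
  refine SetLike.lt_iff_le_and_exists.2 ⟨Submodule.pi_mono fun i _ => hle i, Pi.single k x, ?_, ?_⟩
  · simp only [Submodule.mem_pi, Set.mem_univ, true_implies]
    intro i
    rcases eq_or_ne i k with rfl | hik
    · simpa using hxq
    · simp [hik]
  · simp only [Submodule.mem_pi, Set.mem_univ, true_implies, not_forall]
    exact ⟨k, by simpa using hxp⟩

theorem IsLocalization.isPrincipalIdealRing {R S : Type*} [CommRing R] [CommRing S] [Algebra R S]
    (M : Submonoid R) [IsLocalization M S] [IsPrincipalIdealRing R] : IsPrincipalIdealRing S := by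
  refine ⟨fun J => ?_⟩
  obtain ⟨a, ha⟩ := (IsPrincipalIdealRing.principal (J.under R)).principal
  refine ⟨⟨algebraMap R S a, ?_⟩⟩
  rw [← IsLocalization.map_under M S J, ha, Ideal.submodule_span_eq, Ideal.map_span,
    Set.image_singleton, Ideal.submodule_span_eq]

namespace LaurentPolynomial

instance isPrincipalIdealRing {K : Type*} [Field K] : IsPrincipalIdealRing K[T;T⁻¹] :=
  IsLocalization.isPrincipalIdealRing (Submonoid.powers (Polynomial.X : Polynomial K))

theorem not_isField {R : Type*} [CommRing R] [Nontrivial R] : ¬IsField R[T;T⁻¹] := by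
  intro hfield
  have hne : (T 1 - 1 : R[T;T⁻¹]) ≠ 0 := by
    rw [← Polynomial.toLaurent_X, ← map_one Polynomial.toLaurent, ← map_sub,
      Polynomial.toLaurent_ne_zero, ← Polynomial.C_1]
    exact Polynomial.X_sub_C_ne_zero 1
  obtain ⟨y, hy⟩ := hfield.mul_inv_cancel hne
  -- evaluating at `T = 1` kills `T - 1`
  simpa using congrArg (eval₂ (RingHom.id R) 1) hy

end LaurentPolynomial

theorem Ideal.irreducible_prod_of_isCoatom_pi_span {R ι : Type*} [CommRing R] [IsDomain R]
    [Fintype ι] [DecidableEq ι] (hR : ¬IsField R) {a : ι → R}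
    (h : IsCoatom (Submodule.pi Set.univ fun j => Ideal.span {a j})) : Irreducible (∏ j, a j) := by
  obtain ⟨j, hj, hother⟩ := Pi.covBy_iff.1 <| covBy_top_iff.2 <|
    h.of_strictMono Submodule.pi_univ_strictMono (Submodule.pi_top _)
  have hmax : (Ideal.span {a j}).IsMaximal := Ideal.isMaximal_def.2 (covBy_top_iff.1 hj)
  have hj0 : a j ≠ 0 := fun h0 =>
    Ring.ne_bot_of_isMaximal_of_not_isField hmax hR (by rw [h0, Ideal.span_singleton_eq_bot])
  have hunit : IsUnit (∏ k ∈ Finset.univ.erase j, a k) := IsUnit.prod_iff.2 fun k hk =>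
    Ideal.span_singleton_eq_top.1 (hother k (Finset.ne_of_mem_erase hk))
  rw [← Finset.mul_prod_erase _ _ (Finset.mem_univ j)]
  have hprime : Prime (a j) := (Ideal.span_singleton_prime hj0).1 hmax.isPrime
  exact irreducible_mul_iff.2 (Or.inl ⟨hprime.irreducible, hunit⟩)

namespace Matrix

section CommSemiring

variable {R ι : Type*} [CommSemiring R] [Fintype ι]

theorem exists_eq_mul_of_range_mulVecLin_le {m κ : Type*} [Fintype κ] (g : Matrix m ι R)
    (h : Matrix m κ R) (hle : range g.mulVecLin ≤ range h.mulVecLin) :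
    ∃ c : Matrix κ ι R, g = h * c := by
  classical
  choose c hc using fun j => hle ⟨Pi.single j 1, rfl⟩
  refine ⟨(of c)ᵀ, ?_⟩
  ext i j
  simpa [mul_apply, mulVec, dotProduct, Pi.single_apply] using (congrFun (hc j) i).symm

theorem range_mulVecLin_diagonal [DecidableEq ι] (a : ι → R) :
    range (diagonal a).mulVecLin = Submodule.pi Set.univ fun j => Ideal.span {a j} := by
  ext v
  simp only [mem_range, mulVecLin_apply, Submodule.mem_pi, Set.mem_univ, true_implies,
    Ideal.mem_span_singleton', funext_iff, mulVec_diagonal, mul_comm (a _)]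
  exact ⟨fun ⟨w, hw⟩ j => ⟨w j, hw j⟩, fun h => ⟨fun j => (h j).choose, fun j => (h j).choose_spec⟩⟩

end CommSemiring

variable {R ι : Type*} [CommRing R] [Fintype ι] [DecidableEq ι]

theorem det_dvd_det_of_range_mulVecLin_le {g h : Matrix ι ι R}
    (hle : range g.mulVecLin ≤ range h.mulVecLin) : h.det ∣ g.det := by
  obtain ⟨c, rfl⟩ := exists_eq_mul_of_range_mulVecLin_le g h hle
  exact ⟨c.det, det_mul h c⟩

theorem range_mulVecLin_eq_top_iff (g : Matrix ι ι R) :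
    range g.mulVecLin = ⊤ ↔ IsUnit g.det := by
  rw [range_eq_top, ← isUnit_iff_isUnit_det, ← mulVec_surjective_iff_isUnit]
  rfl

theorem range_mulVecLin_eq_of_le_of_det_dvd [IsDomain R] {g h : Matrix ι ι R}
    (hle : range g.mulVecLin ≤ range h.mulVecLin) (hg : g.det ≠ 0) (hdvd : g.det ∣ h.det) :
    range g.mulVecLin = range h.mulVecLin := by
  obtain ⟨c, rfl⟩ := exists_eq_mul_of_range_mulVecLin_le g h hle
  rw [det_mul] at hg hdvd
  have hc : IsUnit c.det :=
    isUnit_of_dvd_one ((mul_dvd_mul_iff_left (left_ne_zero_of_mul hg)).1 (by simpa using hdvd))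
  rw [mulVecLin_mul, range_comp, (range_mulVecLin_eq_top_iff c).2 hc, Submodule.map_top]

section PID

variable [IsDomain R] [IsPrincipalIdealRing R]

theorem exists_range_mulVecLin_mul_diagonal_eq (W : Submodule R (ι → R)) :
    ∃ (P : Matrix ι ι R) (a : ι → R), IsUnit P.det ∧ range (P * diagonal a).mulVecLin = W := by
  obtain ⟨m, snf⟩ := W.smithNormalForm (Pi.basisFun R ι)
  set P := (Pi.basisFun R ι).toMatrix snf.bM with hP
  set a := Function.extend snf.f snf.a 0 with ha
  refine ⟨P, a, ?_, ?_⟩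
  · rw [← Module.Basis.det_apply]
    exact Module.Basis.isUnit_det _ _
  have hcol : ∀ j, (P * diagonal a).col j = a j • snf.bM j := by
    intro j
    ext i
    simp [hP, mul_diagonal, Module.Basis.toMatrix_apply, mul_comm]
  rw [range_mulVecLin]
  refine le_antisymm (Submodule.span_le.2 ?_) ?_
  · rintro _ ⟨j, rfl⟩
    rw [SetLike.mem_coe, hcol j]
    by_cases hj : ∃ i, snf.f i = j
    · obtain ⟨i, rfl⟩ := hj
      rw [ha, snf.f.injective.extend_apply, ← snf.snf]
      exact (snf.bN i).2
    · rw [ha, Function.extend_apply' _ _ _ hj, Pi.zero_apply, zero_smul]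
      exact W.zero_mem
  · calc W = (⊤ : Submodule R W).map W.subtype := by
          rw [Submodule.map_top, Submodule.range_subtype]
      _ = Submodule.span R (W.subtype '' Set.range snf.bN) := by
        rw [Submodule.span_image, snf.bN.span_eq]
      _ ≤ _ := Submodule.span_mono ?_
    rintro _ ⟨_, ⟨i, rfl⟩, rfl⟩
    exact ⟨snf.f i, by
      rw [hcol, ha, snf.f.injective.extend_apply, Submodule.subtype_apply, snf.snf]⟩

theorem irreducible_det_of_isCoatom_range_mulVecLin (hR : ¬IsField R) {g : Matrix ι ι R}
    (hg : IsCoatom (range g.mulVecLin)) : Irreducible g.det := by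
  obtain ⟨P, a, hP, hPa⟩ := exists_range_mulVecLin_mul_diagonal_eq (range g.mulVecLin)
  have hassoc : Associated (∏ j, a j) g.det := by
    have h := associated_of_dvd_dvd (det_dvd_det_of_range_mulVecLin_le hPa.le)
      (det_dvd_det_of_range_mulVecLin_le hPa.ge)
    rw [det_mul, det_diagonal] at h
    exact (associated_unit_mul_left _ _ hP).symm.trans h.symm
  refine hassoc.irreducible_iff.1 (Ideal.irreducible_prod_of_isCoatom_pi_span hR ?_)
  let e : (ι → R) ≃ₗ[R] (ι → R) := P.toLinearEquiv' (P.invertibleOfIsUnitDet hP)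
  have he : (e : (ι → R) →ₗ[R] ι → R) = P.mulVecLin := by
    rw [toLinearEquiv'_apply, toLin'_apply']
  rwa [← range_mulVecLin_diagonal, ← (Submodule.orderIsoMapComap e).isCoatom_iff,
    Submodule.orderIsoMapComap_apply, ← range_comp, he, ← mulVecLin_mul, hPa]

theorem isCoatom_range_mulVecLin_of_irreducible_det {g : Matrix ι ι R} (hg : Irreducible g.det) :
    IsCoatom (range g.mulVecLin) := by
  refine ⟨fun htop => hg.not_isUnit ((range_mulVecLin_eq_top_iff g).1 htop), fun W hW => ?_⟩
  obtain ⟨P, a, -, rfl⟩ := exists_range_mulVecLin_mul_diagonal_eq W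
  rcases hg.dvd_iff.1 (det_dvd_det_of_range_mulVecLin_le hW.le) with hunit | hassoc
  · exact (range_mulVecLin_eq_top_iff _).2 hunit
  · exact absurd (range_mulVecLin_eq_of_le_of_det_dvd hW.le hg.ne_zero hassoc.dvd) hW.ne

theorem isCoatom_range_mulVecLin_iff_irreducible_det (hR : ¬IsField R) (g : Matrix ι ι R) :
    IsCoatom (range g.mulVecLin) ↔ Irreducible g.det :=
  ⟨irreducible_det_of_isCoatom_range_mulVecLin hR, isCoatom_range_mulVecLin_of_irreducible_det⟩

end PID

end Matrix

/-- For `g ∈ Mₙ(R)`, `R = 𝔽_p[x,x⁻¹]`, the submodule `g·R^n` is maximal in `R^n`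
iff `det g` is nonzero and irreducible in `R`. -/
theorem stmt_5 (p n : ℕ) [Fact p.Prime]
    (g : Matrix (Fin n) (Fin n) (LaurentPolynomial (ZMod p))) :
    IsCoatom (LinearMap.range g.mulVecLin) ↔ (g.det ≠ 0 ∧ Irreducible g.det) := by
  rw [Matrix.isCoatom_range_mulVecLin_iff_irreducible_det LaurentPolynomial.not_isField]
  exact ⟨fun h => ⟨h.ne_zero, h⟩, And.right⟩
end

section
/- A subgroup V of L_n = (ℤ/pℤ)^n ≀ ℤ is normal if and only if its associated triple (s, V₀, v) satisfies: x·V₀ = V₀, (1 − x^s)·A_n ⊆ V₀, and (1 − x)·v ∈ V₀, where A_n is the base group, viewed as a module over 𝔽_p[x,x⁻¹]. -/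
open Finsupp Multiplicative

/-- The base group of the lamplighter group `L_n = (ℤ/pℤ)^n ≀ ℤ`: `⊕_ℤ (ℤ/pℤ)^n`. -/
abbrev LampBase (p n : ℕ) := ℤ →₀ (Fin n → ZMod p)

/-- The shift `x^s` on the base group. -/
def lampShift (p n : ℕ) (s : ℤ) : LampBase p n ≃+ LampBase p n :=
  Finsupp.domCongr (Equiv.addRight s)

/-- The shift action of `ℤ` on the (multiplicative) base group. -/
noncomputable def lampAct (p n : ℕ) :
    Multiplicative ℤ →* MulAut (Multiplicative (LampBase p n)) where
  toFun s := AddEquiv.toMultiplicative (lampShift p n s.toAdd)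
  map_one' := by
    ext w
    simp [lampShift, Finsupp.domCongr_apply]
    rfl
  map_mul' s t := by
    ext w
    simp [lampShift, Finsupp.domCongr_apply, MulAut.mul_def, MulEquiv.trans_apply]
    try ext i
    all_goals simp [Finsupp.equivMapDomain_apply, Equiv.Perm.mul_def]
    all_goals ring_nf

/-- The lamplighter group `L_n = (ℤ/pℤ)^n ≀ ℤ`, realized as the semidirect
product of the base group `⊕_ℤ (ℤ/pℤ)^n` with `ℤ` acting by the shift. -/
abbrev Lamp (p n : ℕ) :=
  SemidirectProduct (Multiplicative (LampBase p n)) (Multiplicative ℤ) (lampAct p n)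

/-!
Write `x = (v, s) ∈ V`. Conjugating by `(a, τ)` sends `inl w` to `inl (x^τ w)` and `x` to
`inl ((1 - x^s) a + (x^τ - 1) v) · x`. Taking `τ = ±1, a = 0` and `τ = 0` shows that the three
conditions are necessary. Conversely, since the image of `V` in `ℤ` is generated by `s`, every
element of `V` is `inl w · x^k` with `w ∈ V₀`; once `x V₀ = V₀` and `(1 - x) v ∈ V₀` are upgraded
to `x^τ V₀ = V₀` and `(x^τ - 1) v ∈ V₀` for all `τ`, the formulas keep both factors in `V`.
-/

open SemidirectProduct

section Lamp

variable {p n : ℕ}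

@[simp]
theorem lampShift_apply (s : ℤ) (w : LampBase p n) (k : ℤ) :
    lampShift p n s w k = w (k - s) := by
  simp [lampShift, Finsupp.domCongr_apply, Finsupp.equivMapDomain_apply, sub_eq_add_neg]

theorem lampShift_add (a b : ℤ) (w : LampBase p n) :
    lampShift p n (a + b) w = lampShift p n a (lampShift p n b w) := by
  ext k i
  simp only [lampShift_apply, sub_add_eq_sub_sub]

@[simp]
theorem lampShift_zero (w : LampBase p n) : lampShift p n 0 w = w := by
  ext k i
  simp

theorem lamp_mk_mul_mk (a b : LampBase p n) (t u : ℤ) :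
    (⟨ofAdd a, ofAdd t⟩ : Lamp p n) * ⟨ofAdd b, ofAdd u⟩ =
      ⟨ofAdd (a + lampShift p n t b), ofAdd (t + u)⟩ := rfl

theorem lamp_mk_inv (a : LampBase p n) (t : ℤ) :
    (⟨ofAdd a, ofAdd t⟩ : Lamp p n)⁻¹ = ⟨ofAdd (lampShift p n (-t) (-a)), ofAdd (-t)⟩ := rfl

theorem lamp_conj_inl (a w : LampBase p n) (τ : ℤ) :
    (⟨ofAdd a, ofAdd τ⟩ : Lamp p n) * inl (ofAdd w) * (⟨ofAdd a, ofAdd τ⟩ : Lamp p n)⁻¹ =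
      inl (ofAdd (lampShift p n τ w)) := by
  change _ * (⟨_, ofAdd 0⟩ : Lamp p n) * _ = ⟨_, ofAdd 0⟩
  rw [lamp_mk_inv, lamp_mk_mul_mk, lamp_mk_mul_mk, add_zero, add_neg_cancel, ← lampShift_add,
    add_neg_cancel, lampShift_zero]
  congr 2
  abel

theorem lamp_conj_mk (a v : LampBase p n) (τ s : ℤ) :
    (⟨ofAdd a, ofAdd τ⟩ : Lamp p n) * ⟨ofAdd v, ofAdd s⟩ * (⟨ofAdd a, ofAdd τ⟩ : Lamp p n)⁻¹ =
      inl (ofAdd (a - lampShift p n s a + (lampShift p n τ v - v))) * ⟨ofAdd v, ofAdd s⟩ := by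
  change _ = (⟨_, ofAdd 0⟩ : Lamp p n) * _
  rw [lamp_mk_inv, lamp_mk_mul_mk, lamp_mk_mul_mk, lamp_mk_mul_mk, ← lampShift_add,
    add_neg_cancel_comm, lampShift_zero, zero_add, map_neg]
  congr 2
  abel

/-- The paper's `V₀ = V ∩ A_n`. -/
noncomputable def lampBaseSubgroup (V : Subgroup (Lamp p n)) : AddSubgroup (LampBase p n) :=
  Subgroup.toAddSubgroup' (V.comap inl)

theorem mem_lampBaseSubgroup {V : Subgroup (Lamp p n)} {w : LampBase p n} :
    w ∈ lampBaseSubgroup V ↔ inl (ofAdd w) ∈ V := Iff.rfl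

section ShiftInvariant

variable {B : AddSubgroup (LampBase p n)} (hB : ∀ w, w ∈ B ↔ lampShift p n 1 w ∈ B)
include hB

theorem lampShift_mem_of_shift_one_invariant (t : ℤ) {w : LampBase p n} (hw : w ∈ B) :
    lampShift p n t w ∈ B := by
  induction t using Int.induction_on generalizing w with
  | zero => rwa [lampShift_zero]
  | succ k ih => rw [add_comm, lampShift_add]; exact (hB _).mp (ih hw)
  | pred k ih =>
    rw [hB, ← lampShift_add, add_sub_cancel]
    exact ih hw

theorem lampShift_sub_self_mem_of_shift_one_invariant {v : LampBase p n}
    (hv : v - lampShift p n 1 v ∈ B) (t : ℤ) : lampShift p n t v - v ∈ B := by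
  induction t using Int.induction_on with
  | zero => rw [lampShift_zero, sub_self]; exact B.zero_mem
  | succ k ih =>
    have hstep : lampShift p n k (lampShift p n 1 v - v) ∈ B :=
      lampShift_mem_of_shift_one_invariant hB k (by rw [← neg_sub]; exact B.neg_mem hv)
    rw [map_sub, ← lampShift_add] at hstep
    simpa only [sub_add_sub_cancel] using B.add_mem hstep ih
  | pred k ih =>
    have hstep := lampShift_mem_of_shift_one_invariant hB (-(k : ℤ) - 1) hv
    rw [map_sub, ← lampShift_add, sub_add_cancel] at hstep
    simpa only [sub_add_sub_cancel] using B.add_mem hstep ih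

end ShiftInvariant

end Lamp

theorem Subgroup.exists_mem_ker_mul_zpow {G H : Type*} [Group G] [Group H] (f : G →* H)
    {V : Subgroup G} {x : G} (hV : V.map f = Subgroup.zpowers (f x)) (hx : x ∈ V) {h : G}
    (hh : h ∈ V) : ∃ y ∈ V, y ∈ f.ker ∧ ∃ k : ℤ, h = y * x ^ k := by
  obtain ⟨k, hk⟩ : f h ∈ Subgroup.zpowers (f x) := hV ▸ Subgroup.mem_map_of_mem f hh
  refine ⟨h * x ^ (-k), V.mul_mem hh (V.zpow_mem hx _), ?_, k, by group⟩
  rw [f.mem_ker, map_mul, map_zpow, ← hk, zpow_neg, mul_inv_cancel]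

section Normal

variable {p n : ℕ} {V : Subgroup (Lamp p n)} {v : LampBase p n} {s : ℤ}

theorem lampShift_one_mem_iff_of_normal (hN : V.Normal) (w : LampBase p n) :
    w ∈ lampBaseSubgroup V ↔ lampShift p n 1 w ∈ lampBaseSubgroup V := by
  refine ⟨fun hw => ?_, fun hw => ?_⟩
  · have := hN.conj_mem _ (mem_lampBaseSubgroup.mp hw) ⟨ofAdd 0, ofAdd 1⟩
    rwa [lamp_conj_inl] at this
  · have := hN.conj_mem _ (mem_lampBaseSubgroup.mp hw) ⟨ofAdd 0, ofAdd (-1)⟩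
    rwa [lamp_conj_inl, ← lampShift_add, neg_add_cancel, lampShift_zero] at this

theorem sub_lampShift_mem_of_normal (hN : V.Normal) (hv : ⟨ofAdd v, ofAdd s⟩ ∈ V)
    (a : LampBase p n) : a - lampShift p n s a ∈ lampBaseSubgroup V := by
  have := hN.conj_mem _ hv ⟨ofAdd a, ofAdd 0⟩
  rwa [lamp_conj_mk, lampShift_zero, sub_self, add_zero, V.mul_mem_cancel_right hv] at this

theorem sub_lampShift_one_mem_of_normal (hN : V.Normal) (hv : ⟨ofAdd v, ofAdd s⟩ ∈ V) :
    v - lampShift p n 1 v ∈ lampBaseSubgroup V := by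
  have := hN.conj_mem _ hv ⟨ofAdd 0, ofAdd 1⟩
  rw [lamp_conj_mk, map_zero, sub_zero, zero_add, V.mul_mem_cancel_right hv] at this
  rw [← neg_sub]
  exact neg_mem this

theorem normal_of_lampBaseSubgroup
    (hs : V.map rightHom = Subgroup.zpowers (ofAdd s)) (hv : ⟨ofAdd v, ofAdd s⟩ ∈ V)
    (hshift : ∀ w, w ∈ lampBaseSubgroup V ↔ lampShift p n 1 w ∈ lampBaseSubgroup V)
    (hsub : ∀ w, w - lampShift p n s w ∈ lampBaseSubgroup V)
    (hv₁ : v - lampShift p n 1 v ∈ lampBaseSubgroup V) : V.Normal := by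
  refine ⟨fun h hh g => ?_⟩
  obtain ⟨y, hy, hy_ker, k, rfl⟩ := Subgroup.exists_mem_ker_mul_zpow rightHom hs hv hh
  obtain ⟨w, rfl⟩ : ∃ w, inl (ofAdd w) = y := by
    rw [← range_inl_eq_ker_rightHom] at hy_ker
    obtain ⟨w, hw⟩ := hy_ker
    exact ⟨w.toAdd, hw⟩
  obtain ⟨a, τ⟩ := g
  change (⟨ofAdd a.toAdd, ofAdd τ.toAdd⟩ : Lamp p n) * _ *
    (⟨ofAdd a.toAdd, ofAdd τ.toAdd⟩ : Lamp p n)⁻¹ ∈ V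
  rw [← MulAut.conj_apply, map_mul, map_zpow, MulAut.conj_apply, MulAut.conj_apply,
    lamp_conj_inl, lamp_conj_mk]
  refine V.mul_mem (lampShift_mem_of_shift_one_invariant hshift _ hy) (V.zpow_mem ?_ k)
  exact V.mul_mem (add_mem (hsub _)
    (lampShift_sub_self_mem_of_shift_one_invariant hshift hv₁ _)) hv

end Normal

theorem stmt_8_general (p n : ℕ)
    (V : Subgroup (Lamp p n)) (s : ℕ) (v : LampBase p n)
    (hs : Subgroup.map SemidirectProduct.rightHom V =
      Subgroup.zpowers (ofAdd (s : ℤ)))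
    (hv : (⟨ofAdd v, ofAdd (s : ℤ)⟩ : Lamp p n) ∈ V) :
    V.Normal ↔
      ((∀ w : LampBase p n, SemidirectProduct.inl (ofAdd w) ∈ V ↔
          SemidirectProduct.inl (ofAdd (lampShift p n 1 w)) ∈ V) ∧
       (∀ w : LampBase p n,
          SemidirectProduct.inl (ofAdd (w - lampShift p n (s : ℤ) w)) ∈ V) ∧
       SemidirectProduct.inl (ofAdd (v - lampShift p n 1 v)) ∈ V) :=
  ⟨fun hN => ⟨lampShift_one_mem_iff_of_normal hN, sub_lampShift_mem_of_normal hN hv,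
      sub_lampShift_one_mem_of_normal hN hv⟩,
    fun ⟨hshift, hsub, hv₁⟩ => normal_of_lampBaseSubgroup hs hv hshift hsub hv₁⟩

/-- Normality criterion for a subgroup of the lamplighter group in terms of its
triple `(s, V₀, v)`. -/
theorem stmt_8 (p n : ℕ) [Fact p.Prime] (hn : 1 ≤ n)
    (V : Subgroup (Lamp p n)) (s : ℕ) (v : LampBase p n)
    (hs : Subgroup.map SemidirectProduct.rightHom V =
      Subgroup.zpowers (ofAdd (s : ℤ)))
    (hv : (⟨ofAdd v, ofAdd (s : ℤ)⟩ : Lamp p n) ∈ V) :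
    V.Normal ↔
      ((∀ w : LampBase p n, SemidirectProduct.inl (ofAdd w) ∈ V ↔
          SemidirectProduct.inl (ofAdd (lampShift p n 1 w)) ∈ V) ∧
       (∀ w : LampBase p n,
          SemidirectProduct.inl (ofAdd (w - lampShift p n (s : ℤ) w)) ∈ V) ∧
       SemidirectProduct.inl (ofAdd (v - lampShift p n 1 v)) ∈ V) :=
  stmt_8_general p n V s v hs hv
end

section
/- Let M be a module over R = 𝔽_p[x,x⁻¹], let k ≥ 1, and let M_π denote the R-module with the same underlying group as M but with x acting as x^k acts on M. If M_π is isomorphic to R as an R-module, then k = 1. -/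
/-!
Transporting the action of `T` on `M` along `e` gives an additive endomorphism `F` of
`𝔽_p[T;T⁻¹]` commuting with multiplication by `T`. Constants are integer multiples of `1`, so
`F` commutes with them as well and is therefore linear: it is multiplication by `u = F 1`.
As `T ^ k` acts on `M` the way `T` acts on `𝔽_p[T;T⁻¹]`, we get `u ^ k = T`; clearing
denominators gives `f ^ k = X ^ (1 + k n)` for a polynomial `f`, and comparing degrees shows
that `k` divides `1`.
-/

namespace LaurentPolynomial

section Linearity

variable {R M N : Type*} [CommSemiring R] [AddCommMonoid M] [AddCommMonoid N]
  [Module R[T;T⁻¹] M] [Module R[T;T⁻¹] N]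

theorem map_T_natCast_smul (f : M →+ N)
    (hf : ∀ m, f ((T 1 : R[T;T⁻¹]) • m) = (T 1 : R[T;T⁻¹]) • f m) (n : ℕ) (m : M) :
    f ((T n : R[T;T⁻¹]) • m) = (T n : R[T;T⁻¹]) • f m := by
  induction n generalizing m with
  | zero => simp only [Nat.cast_zero, T_zero, one_smul]
  | succ n ih => rw [Nat.cast_succ, T_add, mul_smul, mul_smul, ih, hf]

theorem map_T_smul (f : M →+ N)
    (hf : ∀ m, f ((T 1 : R[T;T⁻¹]) • m) = (T 1 : R[T;T⁻¹]) • f m) (n : ℤ) (m : M) :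
    f ((T n : R[T;T⁻¹]) • m) = (T n : R[T;T⁻¹]) • f m := by
  obtain ⟨n, rfl | rfl⟩ := Int.eq_nat_or_neg n
  · exact map_T_natCast_smul f hf n m
  · calc f (T (-n) • m)
        = (T (-n) : R[T;T⁻¹]) • (T n : R[T;T⁻¹]) • f (T (-n) • m) := by
          rw [← mul_smul, ← T_add, neg_add_cancel, T_zero, one_smul]
      _ = T (-n) • f m := by
          rw [← map_T_natCast_smul f hf, ← mul_smul, ← T_add, add_neg_cancel, T_zero, one_smul]

theorem map_smul_of_map_C_smul_of_map_T_one_smul (f : M →+ N)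
    (hC : ∀ (r : R) m, f (C r • m) = C r • f m)
    (hT : ∀ m, f ((T 1 : R[T;T⁻¹]) • m) = (T 1 : R[T;T⁻¹]) • f m)
    (a : R[T;T⁻¹]) (m : M) : f (a • m) = a • f m := by
  induction a using LaurentPolynomial.induction_on' with
  | add a b ha hb => rw [add_smul, map_add, ha, hb, add_smul]
  | C_mul_T n r => rw [mul_smul, mul_smul, hC, map_T_smul f hT]

end Linearity

theorem map_C_smul_zmod {p : ℕ} {M N : Type*} [AddCommGroup M] [AddCommGroup N]
    [Module (ZMod p)[T;T⁻¹] M] [Module (ZMod p)[T;T⁻¹] N] (f : M →+ N) (c : ZMod p) (m : M) :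
    f (C c • m) = C c • f m := by
  obtain ⟨z, rfl⟩ := ZMod.intCast_surjective c
  rw [map_intCast, Int.cast_smul_eq_zsmul, Int.cast_smul_eq_zsmul, map_zsmul]

theorem eq_one_of_pow_eq_T_one {R : Type*} [CommSemiring R] [NoZeroDivisors R] [Nontrivial R]
    {u : R[T;T⁻¹]} {k : ℕ} (h : u ^ k = T 1) : k = 1 := by
  obtain ⟨n, f, hf⟩ := exists_T_pow u
  have hfk : f ^ k = Polynomial.X ^ (1 + k * n) := by
    apply Polynomial.toLaurent_injective
    rw [map_pow, hf, mul_pow, h, T_pow, ← T_add, Polynomial.toLaurent_X_pow]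
    push_cast
    ring_nf
  have hdeg : k * f.natDegree = 1 + k * n := by
    rw [← Polynomial.natDegree_pow, hfk, Polynomial.natDegree_X_pow]
  have hdvd : k ∣ 1 := (Nat.dvd_add_left (Dvd.intro n rfl)).mp (hdeg ▸ Dvd.intro _ rfl)
  exact Nat.dvd_one.mp hdvd

theorem exists_pow_eq_T_one_of_addEquiv {p k : ℕ} {M : Type*} [AddCommGroup M]
    [Module (ZMod p)[T;T⁻¹] M] (e : M ≃+ (ZMod p)[T;T⁻¹])
    (he : ∀ m : M, e ((T k : (ZMod p)[T;T⁻¹]) • m) = T 1 * e m) :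
    ∃ u : (ZMod p)[T;T⁻¹], u ^ k = T 1 := by
  let F : (ZMod p)[T;T⁻¹] →+ (ZMod p)[T;T⁻¹] :=
    (e : M →+ _).comp ((DistribSMul.toAddMonoidHom M (T 1 : (ZMod p)[T;T⁻¹])).comp e.symm)
  have hF : ∀ a, F a = e ((T 1 : (ZMod p)[T;T⁻¹]) • e.symm a) := fun _ => rfl
  have he_symm : ∀ a, e.symm (T 1 * a) = T k • e.symm a := fun a =>
    e.symm_apply_eq.mpr (by rw [he, e.apply_symm_apply])
  have hF_T : ∀ a, F (T 1 • a) = T 1 • F a := fun a => by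
    rw [smul_eq_mul, hF, he_symm, smul_comm, he, ← hF, smul_eq_mul]
  have hF_mul : ∀ a, F a = a * F 1 := fun a => by
    simpa only [smul_eq_mul, mul_one] using
      map_smul_of_map_C_smul_of_map_T_one_smul F (map_C_smul_zmod F) hF_T a 1
  have hF_iterate : ∀ (j : ℕ) a, F^[j] a = e ((T 1 : (ZMod p)[T;T⁻¹]) ^ j • e.symm a) := by
    intro j a
    induction j with
    | zero => rw [Function.iterate_zero_apply, pow_zero, one_smul, e.apply_symm_apply]
    | succ j ih =>
      rw [Function.iterate_succ_apply', ih, hF, e.symm_apply_apply, smul_smul, pow_succ']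
  have hF_iterate_one : ∀ j : ℕ, F^[j] 1 = F 1 ^ j := fun j => by
    induction j with
    | zero => rw [Function.iterate_zero_apply, pow_zero]
    | succ j ih => rw [Function.iterate_succ_apply', ih, hF_mul, pow_succ]
  refine ⟨F 1, ?_⟩
  rw [← hF_iterate_one, hF_iterate, T_pow, mul_one, he, e.apply_symm_apply, mul_one]

end LaurentPolynomial

theorem stmt_19_general (p k : ℕ) [Fact p.Prime]
    (M : Type) [AddCommGroup M] [Module (LaurentPolynomial (ZMod p)) M]
    (e : M ≃+ LaurentPolynomial (ZMod p))
    (he : ∀ m : M,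
      e ((LaurentPolynomial.T (k : ℤ) : LaurentPolynomial (ZMod p)) • m) =
        LaurentPolynomial.T 1 * e m) :
    k = 1 := by
  obtain ⟨u, hu⟩ := LaurentPolynomial.exists_pow_eq_T_one_of_addEquiv e he
  exact LaurentPolynomial.eq_one_of_pow_eq_T_one hu

/-- If `M` is an `R`-module (`R = 𝔽_p[x,x⁻¹]`) and the module `M_π`, obtained by
letting `x` act as `x^k`, is isomorphic to `R` as an `R`-module, then `k = 1`.
The isomorphism `M_π ≅ R` is expressed as an additive isomorphism `e : M ≃+ R`
intertwining the `x^k`-action on `M` with multiplication by `x` on `R` (which,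
since any additive map of `𝔽_p`-vector spaces is `𝔽_p`-linear and `R` is
generated by `𝔽_p`, `x` and `x⁻¹`, says exactly that `e` is `R`-linear on `M_π`). -/
theorem stmt_19 (p k : ℕ) [Fact p.Prime] (hk : 1 ≤ k)
    (M : Type) [AddCommGroup M] [Module (LaurentPolynomial (ZMod p)) M]
    (e : M ≃+ LaurentPolynomial (ZMod p))
    (he : ∀ m : M,
      e ((LaurentPolynomial.T (k : ℤ) : LaurentPolynomial (ZMod p)) • m) =
        LaurentPolynomial.T 1 * e m) :
    k = 1 :=
  stmt_19_general p k M e he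
end
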